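/- For every r ≥ 0, the holomorphic function f: B_{c_0} → c_0 with j-th coordinate f((x_n))_j = x_j^N for j ∈ σ_N (where σ_N is the N-th consecutive block of ℕ of length N!) satisfies that the sequence (e_n(f(2^{-r}B_{c_0})))_n does not belong to ℓ_p for any 1 ≤ p < ∞, while for each m, the m-homogeneous Taylor polynomial P_m f(0) has finite rank. -/

import Mathlib

open Filter Metric Set Topology

/-- The `n`-th dyadic entropy number of a set `L` in a metric space: the infimum of
radii `ε > 0` such that `L` can be covered by `2^(n-1)` balls of radius `ε`. -/
noncomputable def entropyNum {X : Type*} [MetricSpace X] (n : ℕ) (L : Set X) : ℝ :=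
  sInf {ε : ℝ | 0 < ε ∧ ∃ s : Finset X, s.card ≤ 2 ^ (n - 1) ∧ L ⊆ ⋃ x ∈ s, Metric.ball x ε}

/-- The covering number `N(L, ε)`: minimal number of `ε`-balls needed to cover `L`. -/
noncomputable def coveringNum {X : Type*} [MetricSpace X] (L : Set X) (ε : ℝ) : ℕ :=
  sInf {n : ℕ | ∃ s : Finset X, s.card = n ∧ L ⊆ ⋃ x ∈ s, Metric.ball x ε}

/-- The upper box (counting) dimension of `L`. -/
noncomputable def upperBoxDim {X : Type*} [MetricSpace X] (L : Set X) : EReal :=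
  Filter.limsup (fun ε : ℝ => ((Real.log (coveringNum L ε) / (-Real.log ε) : ℝ) : EReal)) (𝓝[>] 0)

/-- The lower box (counting) dimension of `L`. -/
noncomputable def lowerBoxDim {X : Type*} [MetricSpace X] (L : Set X) : EReal :=
  Filter.liminf (fun ε : ℝ => ((Real.log (coveringNum L ε) / (-Real.log ε) : ℝ) : EReal)) (𝓝[>] 0)

/-- `blockStart N = 1! + 2! + ⋯ + N!`, the number of indices in the first `N` blocks. -/
def blockStart : ℕ → ℕ
  | 0 => 0
  | N + 1 => blockStart N + Nat.factorial (N + 1)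

/-- The index `N ≥ 1` of the block `σ_N` containing coordinate `j` (coordinates indexed
from `0`, so coordinate `j` is the `(j+1)`-st coordinate of the paper; `σ_N` consists of
the `N!` consecutive coordinates `blockStart (N-1), …, blockStart N - 1`). -/
noncomputable def blockOf (j : ℕ) : ℕ := sInf {N : ℕ | j < blockStart N}

/-!
For `t = ρ / 2` the `2^{N!}` points `t • 𝟙_A`, `A ⊆ σ_N`, lie in `ρ B_{c₀}`, and `f` maps them to
points at mutual distance at least `t^N` (compare the coordinate of `A ∆ A'`). By pigeonhole,
`2^{n-1} < 2^{N!}` balls of radius below `t^N / 2` cannot cover them, so `e_n ≥ t^N / 2` for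
all `n < N!`. Hence `∑ e_n^p ≥ N! (t^p)^N / 2^p`, which is unbounded because factorials beat
geometric sequences. The `m`-homogeneous part only sees the finitely many coordinates of `σ_m`,
so its range lies in the span of finitely many unit vectors.
-/

open ZeroAtInfty
open scoped Nat

namespace ZeroAtInftyContinuousMap

section Norm

variable {α β : Type*} [TopologicalSpace α] [SeminormedAddCommGroup β]

theorem dist_coe_le_dist (f g : C₀(α, β)) (x : α) : dist (f x) (g x) ≤ dist f g := by
  rw [← dist_toBCF_eq_dist]
  exact BoundedContinuousFunction.dist_coe_le_dist (f := f.toBCF) (g := g.toBCF) x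

theorem norm_coe_le_norm (f : C₀(α, β)) (x : α) : ‖f x‖ ≤ ‖f‖ := by
  simpa using dist_coe_le_dist f 0 x

theorem norm_le {f : C₀(α, β)} {C : ℝ} (hC : 0 ≤ C) : ‖f‖ ≤ C ↔ ∀ x, ‖f x‖ ≤ C := by
  rw [← norm_toBCF_eq_norm]
  exact BoundedContinuousFunction.norm_le hC

end Norm

theorem coe_sum {α β ι : Type*} [TopologicalSpace α] [TopologicalSpace β] [AddCommMonoid β]
    [ContinuousAdd β] (s : Finset ι) (F : ι → C₀(α, β)) : ⇑(∑ i ∈ s, F i) = ∑ i ∈ s, ⇑(F i) :=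
  map_sum (⟨⟨(⇑), rfl⟩, fun _ _ => rfl⟩ : C₀(α, β) →+ (α → β)) F s

end ZeroAtInftyContinuousMap

open ZeroAtInftyContinuousMap

section FinsetIndicator

variable {α β : Type*} [TopologicalSpace α] [DiscreteTopology α]

noncomputable def finsetIndicator [TopologicalSpace β] [Zero β] (A : Finset α) (t : β) :
    C₀(α, β) where
  toFun := Set.indicator A fun _ => t
  continuous_toFun := continuous_of_discreteTopology
  zero_at_infty' := by
    rw [cocompact_eq_cofinite α]
    exact tendsto_const_nhds.congr'
      (A.eventually_cofinite_notMem.mono fun j hj => (Set.indicator_of_notMem hj _).symm)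

@[simp]
theorem coe_finsetIndicator [TopologicalSpace β] [Zero β] (A : Finset α) (t : β) :
    ⇑(finsetIndicator A t) = Set.indicator A fun _ => t :=
  rfl

theorem norm_finsetIndicator_le [SeminormedAddCommGroup β] (A : Finset α) (t : β) :
    ‖finsetIndicator A t‖ ≤ ‖t‖ :=
  (norm_le (norm_nonneg t)).2 fun _ => norm_indicator_le_norm_self (fun _ => t) _

theorem eq_sum_smul_finsetIndicator [NormedField β] {B : Finset α} {x : C₀(α, β)}
    (hx : ∀ j ∉ B, x j = 0) : x = ∑ j ∈ B, x j • finsetIndicator {j} (1 : β) := by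
  classical
  ext k
  simp only [coe_sum, Finset.sum_apply, coe_smul, Pi.smul_apply, coe_finsetIndicator,
    Finset.coe_singleton, Set.indicator_apply, Set.mem_singleton_iff, smul_eq_mul, mul_ite, mul_one,
    mul_zero, Finset.sum_ite_eq]
  split_ifs with hk
  · rfl
  · exact hx k hk

theorem finiteDimensional_span_of_forall_apply_eq_zero [NormedField β] (B : Finset α)
    {S : Set C₀(α, β)} (hS : ∀ x ∈ S, ∀ j ∉ B, x j = 0) :
    FiniteDimensional β (Submodule.span β S) := by
  set e : α → C₀(α, β) := fun j => finsetIndicator {j} 1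
  have hle : Submodule.span β S ≤ Submodule.span β (e '' B) := by
    refine Submodule.span_le.2 fun x hx => ?_
    rw [SetLike.mem_coe, eq_sum_smul_finsetIndicator (hS x hx)]
    exact Submodule.sum_mem _ fun j hj =>
      Submodule.smul_mem _ _ (Submodule.subset_span ⟨j, hj, rfl⟩)
  have := FiniteDimensional.span_of_finite β (B.finite_toSet.image e)
  exact Submodule.finiteDimensional_of_le hle

end FinsetIndicator

theorem blockStart_strictMono : StrictMono blockStart :=
  strictMono_nat_of_lt_succ fun N => Nat.lt_add_of_pos_right (Nat.factorial_pos (N + 1))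

-- The paper's `σ_N`; `block 0 = ∅` by truncated subtraction, matching `1 ≤ blockOf j`.
def block (N : ℕ) : Finset ℕ := Finset.Ico (blockStart (N - 1)) (blockStart N)

theorem card_block {N : ℕ} (hN : 1 ≤ N) : (block N).card = N ! := by
  obtain ⟨M, rfl⟩ := Nat.exists_eq_add_of_le' hN
  simp [block, blockStart]

theorem blockOf_eq_iff {j N : ℕ} : blockOf j = N ↔ j ∈ block N := by
  cases N with
  | zero =>
    have hne : {N | j < blockStart N} ≠ ∅ := Set.nonempty_iff_ne_empty.1
      ⟨j + 1, (Nat.lt_succ_self j).trans_le (blockStart_strictMono.id_le _)⟩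
    simp [blockOf, Nat.sInf_eq_zero, hne, block, blockStart]
  | succ M =>
    have hclosed : ∀ k₁ k₂ : ℕ, k₁ ≤ k₂ → j < blockStart k₁ → j < blockStart k₂ :=
      fun _ _ hk hj => hj.trans_le (blockStart_strictMono.monotone hk)
    rw [blockOf, Nat.sInf_upward_closed_eq_succ_iff (s := {N | j < blockStart N}) hclosed]
    simp [block, and_comm]

theorem entropyNum_nonneg {X : Type*} [MetricSpace X] (n : ℕ) (L : Set X) : 0 ≤ entropyNum n L :=
  Real.sInf_nonneg fun _ hε => hε.1.le

theorem le_entropyNum_of_pairwise_le_dist {X ι : Type*} [MetricSpace X] {L : Set X}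
    (hL : Bornology.IsBounded L) {S : Finset ι} {y : ι → X} (hyL : ∀ i ∈ S, y i ∈ L) {δ : ℝ}
    (hsep : (S : Set ι).Pairwise fun i j => δ ≤ dist (y i) (y j)) {n : ℕ}
    (hn : 2 ^ (n - 1) < S.card) : δ / 2 ≤ entropyNum n L := by
  obtain ⟨i₀, hi₀⟩ : S.Nonempty := Finset.card_pos.1 (Nat.zero_lt_of_lt hn)
  refine le_csInf ?_ ?_
  · obtain ⟨R, hR, hLR⟩ := hL.subset_ball_lt 0 (y i₀)
    exact ⟨R, hR, {y i₀}, by simp [Nat.one_le_two_pow], by simpa using hLR⟩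
  · rintro ε ⟨-, s, hs, hcov⟩
    have hcenter : ∀ i ∈ S, ∃ c ∈ s, y i ∈ ball c ε := fun i hi => by
      simpa using hcov (hyL i hi)
    have : Nonempty X := ⟨y i₀⟩
    choose! c hcs hc using hcenter
    obtain ⟨i, hi, j, hj, hij, hcij⟩ :=
      Finset.exists_ne_map_eq_of_card_lt_of_maps_to (hs.trans_lt hn) hcs
    have hyi := hc i hi
    rw [hcij, mem_ball] at hyi
    have hyj := mem_ball.1 (hc j hj)
    linarith [hsep hi hj hij, dist_triangle_right (y i) (y j) (c j)]

theorem not_summable_of_eventually_forall_lt_factorial_le {a : ℕ → ℝ} (ha : ∀ n, 0 ≤ a n)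
    {K c : ℝ} (hK : 0 < K) (hc : 0 < c) (h : ∀ᶠ N in atTop, ∀ n < N !, K * c ^ N ≤ a n) :
    ¬ Summable a := by
  intro hs
  have hgrowth : Tendsto (fun N : ℕ => K * (N ! * c ^ N)) atTop atTop := by
    have h0 : Tendsto (fun N : ℕ => c⁻¹ ^ N / N !) atTop (𝓝[>] 0) :=
      tendsto_nhdsWithin_iff.2 ⟨FloorSemiring.tendsto_pow_div_factorial_atTop c⁻¹,
        Eventually.of_forall fun N => Set.mem_Ioi.2 (by positivity)⟩
    refine Tendsto.const_mul_atTop hK (h0.inv_tendsto_nhdsGT_zero.congr fun N => ?_)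
    rw [Pi.inv_apply, inv_div, inv_pow, div_inv_eq_mul]
  obtain ⟨N, hN, hbig⟩ := (h.and (hgrowth.eventually_gt_atTop (∑' n, a n))).exists
  have hsum : K * (N ! * c ^ N) ≤ ∑ n ∈ Finset.range N !, a n := by
    calc K * (N ! * c ^ N) = ∑ n ∈ Finset.range N !, K * c ^ N := by
          rw [Finset.sum_const, Finset.card_range, nsmul_eq_mul]; ring
      _ ≤ ∑ n ∈ Finset.range N !, a n :=
          Finset.sum_le_sum fun n hn => hN n (Finset.mem_range.1 hn)
  linarith [hs.sum_le_tsum (Finset.range N !) fun n _ => ha n]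

section PowerBlocks

variable {f : C₀(ℕ, ℂ) → C₀(ℕ, ℂ)}
  (hf : ∀ x : C₀(ℕ, ℂ), ‖x‖ < 1 → ∀ j : ℕ, f x j = (x j) ^ blockOf j)
include hf

theorem isBounded_image_ball_of_apply_eq_pow {ρ : ℝ} (hρ : ρ ≤ 1) :
    Bornology.IsBounded (f '' ball 0 ρ) := by
  refine (isBounded_closedBall (x := 0) (r := 1)).subset ?_
  rintro _ ⟨x, hx, rfl⟩
  have hx1 : ‖x‖ < 1 := (mem_ball_zero_iff.1 hx).trans_le hρ
  rw [mem_closedBall_zero_iff, norm_le zero_le_one]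
  intro j
  rw [hf x hx1 j, norm_pow]
  exact pow_le_one₀ (norm_nonneg _) ((norm_coe_le_norm x j).trans hx1.le)

theorem apply_finsetIndicator_of_mem_block {t : ℂ} (ht : ‖t‖ < 1) (A : Finset ℕ) {N j : ℕ}
    (hj : j ∈ block N) : f (finsetIndicator A t) j = if j ∈ A then t ^ N else 0 := by
  have hN : N ≠ 0 := by
    rintro rfl
    simp [block] at hj
  rw [hf _ ((norm_finsetIndicator_le A t).trans_lt ht), blockOf_eq_iff.2 hj,
    coe_finsetIndicator, Set.indicator_apply]
  split_ifs <;> simp_all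

theorem norm_pow_le_dist_apply_finsetIndicator {t : ℂ} (ht : ‖t‖ < 1) {N : ℕ} {A A' : Finset ℕ}
    (hA : A ⊆ block N) (hA' : A' ⊆ block N) (hne : A ≠ A') :
    ‖t‖ ^ N ≤ dist (f (finsetIndicator A t)) (f (finsetIndicator A' t)) := by
  obtain ⟨j, hj⟩ : ∃ j, ¬(j ∈ A ↔ j ∈ A') := by
    by_contra! h
    exact hne (Finset.ext h)
  have hjN : j ∈ block N := by
    by_cases hjA : j ∈ A
    · exact hA hjA
    · exact hA' (by tauto)
  refine le_trans ?_ (dist_coe_le_dist _ _ j)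
  rw [apply_finsetIndicator_of_mem_block hf ht A hjN,
    apply_finsetIndicator_of_mem_block hf ht A' hjN]
  by_cases hjA : j ∈ A <;> simp_all [norm_pow]

theorem le_entropyNum_image_ball {ρ : ℝ} (hρ : 0 < ρ) (hρ1 : ρ ≤ 1) {N n : ℕ} (hN : 1 ≤ N)
    (hn : n < N !) : (ρ / 2) ^ N / 2 ≤ entropyNum n (f '' ball 0 ρ) := by
  set t : ℂ := ((ρ / 2 : ℝ) : ℂ)
  have ht : ‖t‖ = ρ / 2 := by simp [t, abs_of_pos hρ]
  have ht1 : ‖t‖ < 1 := by linarith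
  rw [← ht]
  refine le_entropyNum_of_pairwise_le_dist (isBounded_image_ball_of_apply_eq_pow hf hρ1)
    (S := (block N).powerset) (y := fun A => f (finsetIndicator A t)) ?_ ?_ ?_
  · intro A _
    exact mem_image_of_mem f
      (mem_ball_zero_iff.2 ((norm_finsetIndicator_le A t).trans_lt (by linarith)))
  · intro A hA A' hA' hne
    exact norm_pow_le_dist_apply_finsetIndicator hf ht1 (Finset.mem_powerset.1 hA)
      (Finset.mem_powerset.1 hA') hne
  · rw [Finset.card_powerset, card_block hN]
    exact Nat.pow_lt_pow_right one_lt_two (by omega)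

theorem not_summable_entropyNum_image_ball_rpow {ρ : ℝ} (hρ : 0 < ρ) (hρ1 : ρ ≤ 1) {p : ℝ}
    (hp : 0 < p) : ¬ Summable fun n => entropyNum n (f '' ball 0 ρ) ^ p := by
  refine not_summable_of_eventually_forall_lt_factorial_le
    (fun n => Real.rpow_nonneg (entropyNum_nonneg n _) p) (K := (2 : ℝ)⁻¹ ^ p)
    (c := (ρ / 2) ^ p) (by positivity) (by positivity) ?_
  filter_upwards [eventually_ge_atTop 1] with N hN n hn
  calc (2 : ℝ)⁻¹ ^ p * ((ρ / 2) ^ p) ^ N = ((ρ / 2) ^ N) ^ p / 2 ^ p := by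
        rw [Real.rpow_pow_comm (by positivity), Real.inv_rpow zero_le_two, inv_mul_eq_div]
    _ = ((ρ / 2) ^ N / 2) ^ p := (Real.div_rpow (by positivity) zero_le_two p).symm
    _ ≤ entropyNum n (f '' ball 0 ρ) ^ p :=
        Real.rpow_le_rpow (by positivity) (le_entropyNum_image_ball hf hρ hρ1 hN hn) hp.le

end PowerBlocks

open ZeroAtInfty in
/-- For the holomorphic `f : B_{c₀} → c₀` whose `j`-th coordinate is `xⱼ^N` for
`j ∈ σ_N`, the sequence of entropy numbers of `f(2⁻ʳ B_{c₀})` is not in `ℓ_p` for any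
`1 ≤ p < ∞`, while each `m`-homogeneous Taylor polynomial of `f` at `0` has finite rank. -/
theorem stmt16 (r : ℕ) (f : C₀(ℕ, ℂ) → C₀(ℕ, ℂ))
    (hf : ∀ x : C₀(ℕ, ℂ), ‖x‖ < 1 → ∀ j : ℕ, f x j = (x j) ^ blockOf j) :
    (∀ p : ℝ, 1 ≤ p →
      ¬ Summable (fun n : ℕ =>
        entropyNum n (f '' Metric.ball (0 : C₀(ℕ, ℂ)) ((2 : ℝ) ^ (-(r : ℝ)))) ^ p)) ∧
    (∀ m : ℕ, 1 ≤ m → ∀ g : C₀(ℕ, ℂ) → C₀(ℕ, ℂ),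
      (∀ x : C₀(ℕ, ℂ), ∀ j : ℕ, g x j = if blockOf j = m then (x j) ^ m else 0) →
      FiniteDimensional ℂ (Submodule.span ℂ (Set.range g))) := by
  refine ⟨fun p hp => ?_, fun m _ g hg => ?_⟩
  · exact not_summable_entropyNum_image_ball_rpow hf (by positivity)
      (Real.rpow_le_one_of_one_le_of_nonpos one_le_two (by simp)) (by linarith)
  · refine finiteDimensional_span_of_forall_apply_eq_zero (block m) ?_
    rintro _ ⟨x, rfl⟩ j hj
    rw [hg, if_neg (mt blockOf_eq_iff.1 hj)]
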